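/- Let v : ℝ × ℝ³ → ℝ³, ρ : ℝ × ℝ³ → ℝ and U : ℝ × ℝ³ → Matrix (Fin 3) (Fin 3) ℝ be differentiable, and suppose that at every point (t, x): (i) ∂ₜρ + Σ_k ∂_{x_k}(ρ·v^k) = 0, and (ii) for all indices i, j: ∂ₜU^{ij} + Σ_k v^k · ∂_{x_k}U^{ij} = Σ_k (∂_{x_k}v^i) · U^{kj}. Then the function g(t, x) = ρ(t, x) · det U(t, x) satisfies the transport equation ∂ₜg + Σ_k v^k · ∂_{x_k}g = 0 at every point. -/

import Mathlib

/-- Time partial derivative of a function of `(t, x) ∈ ℝ × ℝ³`. -/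
noncomputable def partialT (f : ℝ × (Fin 3 → ℝ) → ℝ) (p : ℝ × (Fin 3 → ℝ)) : ℝ :=
  deriv (fun τ : ℝ => f (τ, p.2)) p.1

/-- Spatial partial derivative `∂_{x_k}` of a function of `(t, x) ∈ ℝ × ℝ³`. -/
noncomputable def partialX (k : Fin 3) (f : ℝ × (Fin 3 → ℝ) → ℝ)
    (p : ℝ × (Fin 3 → ℝ)) : ℝ :=
  deriv (fun s : ℝ => f (p.1, p.2 + s • (Pi.single k 1 : Fin 3 → ℝ))) 0

/-!
Write `D = ∂ₜ + v·∇` for the material derivative. At each point it is the derivative in the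
direction `(1, v)`, so it obeys the Leibniz rule, and by Jacobi's formula
`D (det U) = tr (DU · adj U)`. The deformation equation says `DU = ∇v · U`, hence
`D (det U) = tr (∇v · U · adj U) = det U · div v`, while the mass equation says
`D ρ = -ρ · div v`. The two contributions to `D (ρ · det U)` cancel.
-/

namespace Matrix

variable {𝕜 R n : Type*} [NontriviallyNormedField 𝕜] [CommRing R] [Fintype n] [DecidableEq n]

noncomputable def detRowContinuousMultilinearMap :
    ContinuousMultilinearMap 𝕜 (fun _ : n => n → 𝕜) 𝕜 where
  toMultilinearMap := (detRowAlternating : (n → 𝕜) [⋀^n]→ₗ[𝕜] 𝕜).toMultilinearMap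
  cont := continuous_id.matrix_det

theorem det_updateRow_eq_vecMul_adjugate (A : Matrix n n R) (i : n) (b : n → R) :
    (A.updateRow i b).det = (b ᵥ* adjugate A) i := by
  rw [← cramer_transpose_apply, cramer_eq_adjugate_mulVec, ← adjugate_transpose,
    mulVec_transpose]

theorem sum_det_updateRow (A B : Matrix n n R) :
    ∑ i, (A.updateRow i (B i)).det = trace (B * adjugate A) := by
  simp only [det_updateRow_eq_vecMul_adjugate, trace, diag, mul_apply, vecMul, dotProduct]

theorem trace_mul_mul_adjugate (A B : Matrix n n R) :
    trace (A * B * adjugate B) = B.det * trace A := by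
  rw [Matrix.mul_assoc, mul_adjugate, Matrix.mul_smul, Matrix.mul_one, trace_smul, smul_eq_mul]

end Matrix

section MatrixDet

variable {𝕜 n : Type*} [NontriviallyNormedField 𝕜] [Fintype n] [DecidableEq n]

theorem HasDerivAt.matrix_det {m : 𝕜 → Matrix n n 𝕜} {m' : Matrix n n 𝕜} {t : 𝕜}
    (h : ∀ i j, HasDerivAt (fun s => m s i j) (m' i j) t) :
    HasDerivAt (fun s => (m s).det) (m' * (m t).adjugate).trace t := by
  -- `Matrix n n 𝕜` carries no norm, so we differentiate in the defeq space `n → n → 𝕜` of rows,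
  -- where `det` is multilinear and its derivative replaces one row at a time.
  have hm : HasDerivAt (fun s => (m s : n → n → 𝕜)) (m' : n → n → 𝕜) t :=
    hasDerivAt_pi.2 fun i => hasDerivAt_pi.2 fun j => h i j
  have := Matrix.detRowContinuousMultilinearMap.hasFDerivAt (m t) |>.comp_hasDerivAt t hm
  exact this.congr_deriv <|
    (ContinuousMultilinearMap.linearDeriv_apply _ _ _).trans (Matrix.sum_det_updateRow _ _)

theorem DifferentiableAt.matrix_det {E : Type*} [NormedAddCommGroup E] [NormedSpace 𝕜 E]
    {m : E → Matrix n n 𝕜} {x : E}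
    (h : ∀ i j, DifferentiableAt 𝕜 (fun y => m y i j) x) :
    DifferentiableAt 𝕜 (fun y => (m y).det) x := by
  have hm : DifferentiableAt 𝕜 (fun y => (m y : n → n → 𝕜)) x :=
    differentiableAt_pi.2 fun i => differentiableAt_pi.2 fun j => h i j
  have hdet := (Matrix.detRowContinuousMultilinearMap (𝕜 := 𝕜) (n := n)).hasFDerivAt (m x)
  exact hdet.differentiableAt.comp x hm

end MatrixDet

section Transport

variable {f g : ℝ × (Fin 3 → ℝ) → ℝ} {p : ℝ × (Fin 3 → ℝ)}

theorem partialT_eq_fderiv (hf : DifferentiableAt ℝ f p) : partialT f p = fderiv ℝ f p (1, 0) :=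
  (hf.hasFDerivAt.comp_hasDerivAt p.1 ((hasDerivAt_id _).prodMk (hasDerivAt_const _ p.2))).deriv

theorem partialX_eq_fderiv (k : Fin 3) (hf : DifferentiableAt ℝ f p) :
    partialX k f p = fderiv ℝ f p (0, Pi.single k 1) := by
  have hline : HasDerivAt (fun s : ℝ => (p.1, p.2 + s • (Pi.single k 1 : Fin 3 → ℝ)))
      ((0 : ℝ), (Pi.single k 1 : Fin 3 → ℝ)) 0 := by
    simpa using (hasDerivAt_const (0 : ℝ) p.1).prodMk
      (((hasDerivAt_id (0 : ℝ)).smul_const (Pi.single k 1 : Fin 3 → ℝ)).const_add p.2)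
  exact (hf.hasFDerivAt.comp_hasDerivAt_of_eq 0 hline (by simp)).deriv

variable (v : ℝ × (Fin 3 → ℝ) → Fin 3 → ℝ)

noncomputable def materialDeriv (f : ℝ × (Fin 3 → ℝ) → ℝ) (p : ℝ × (Fin 3 → ℝ)) : ℝ :=
  partialT f p + ∑ k, v p k * partialX k f p

noncomputable def velocityGradient (p : ℝ × (Fin 3 → ℝ)) : Matrix (Fin 3) (Fin 3) ℝ :=
  Matrix.of fun i k => partialX k (fun q => v q i) p

noncomputable def materialDerivMatrix (U : ℝ × (Fin 3 → ℝ) → Matrix (Fin 3) (Fin 3) ℝ)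
    (p : ℝ × (Fin 3 → ℝ)) : Matrix (Fin 3) (Fin 3) ℝ :=
  Matrix.of fun i j => materialDeriv v (fun q => U q i j) p

theorem materialDeriv_eq_fderiv (hf : DifferentiableAt ℝ f p) :
    materialDeriv v f p = fderiv ℝ f p (1, v p) := by
  have hdir :
      ((1 : ℝ), v p) = (1, 0) + ∑ k, v p k • ((0 : ℝ), (Pi.single k 1 : Fin 3 → ℝ)) := by
    ext k <;> simp [Prod.fst_sum, Prod.snd_sum, Pi.single_apply]
  rw [materialDeriv, hdir, map_add, map_sum, partialT_eq_fderiv hf]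
  simp only [map_smul, smul_eq_mul, partialX_eq_fderiv _ hf]

theorem partialX_mul (k : Fin 3) (hf : DifferentiableAt ℝ f p) (hg : DifferentiableAt ℝ g p) :
    partialX k (fun q => f q * g q) p = partialX k f p * g p + f p * partialX k g p := by
  rw [partialX_eq_fderiv k (hf.fun_mul hg), fderiv_fun_mul hf hg, partialX_eq_fderiv k hf,
    partialX_eq_fderiv k hg]
  simp only [add_apply, smul_apply, smul_eq_mul]
  ring

theorem materialDeriv_mul (hf : DifferentiableAt ℝ f p) (hg : DifferentiableAt ℝ g p) :
    materialDeriv v (fun q => f q * g q) p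
      = materialDeriv v f p * g p + f p * materialDeriv v g p := by
  rw [materialDeriv_eq_fderiv v (hf.fun_mul hg), fderiv_fun_mul hf hg,
    materialDeriv_eq_fderiv v hf, materialDeriv_eq_fderiv v hg]
  simp only [add_apply, smul_apply, smul_eq_mul]
  ring

theorem materialDeriv_det {U : ℝ × (Fin 3 → ℝ) → Matrix (Fin 3) (Fin 3) ℝ}
    (hU : ∀ i j, DifferentiableAt ℝ (fun q => U q i j) p) :
    materialDeriv v (fun q => (U q).det) p
      = (materialDerivMatrix v U p * (U p).adjugate).trace := by
  have hdet := DifferentiableAt.matrix_det hU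
  have hline : HasLineDerivAt ℝ (fun q => (U q).det)
      (materialDerivMatrix v U p * (U p).adjugate).trace
      p (1, v p) := by
    have := HasDerivAt.matrix_det (m := fun t : ℝ => U (p + t • (1, v p))) (t := 0)
      (m' := materialDerivMatrix v U p) fun i j => by
        rw [materialDerivMatrix, Matrix.of_apply, materialDeriv_eq_fderiv v (hU i j)]
        exact (hU i j).hasFDerivAt.hasLineDerivAt _
    rwa [zero_smul, add_zero] at this
  rw [materialDeriv_eq_fderiv v hdet, ← hdet.lineDeriv_eq_fderiv, hline.lineDeriv]

theorem materialDeriv_eq_of_mass_conservation {ρ : ℝ × (Fin 3 → ℝ) → ℝ}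
    (hρ : DifferentiableAt ℝ ρ p) (hv : ∀ k, DifferentiableAt ℝ (fun q => v q k) p)
    (hmass : partialT ρ p + ∑ k, partialX k (fun q => ρ q * v q k) p = 0) :
    materialDeriv v ρ p = -(ρ p * (velocityGradient v p).trace) := by
  simp only [partialX_mul _ hρ (hv _), Finset.sum_add_distrib, ← Finset.mul_sum,
    mul_comm (partialX _ ρ p)] at hmass
  simp only [materialDeriv, Matrix.trace, Matrix.diag, velocityGradient, Matrix.of_apply]
  linear_combination hmass

end Transport

/-- If `∂ₜρ + div(ρv) = 0` and `∂ₜU + v·∇U = ∇v·U` pointwise, then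
`g = ρ·det U` satisfies the transport equation `∂ₜg + v·∇g = 0` pointwise. -/
theorem rho_det_transport
    (v : ℝ × (Fin 3 → ℝ) → Fin 3 → ℝ)
    (ρ : ℝ × (Fin 3 → ℝ) → ℝ)
    (U : ℝ × (Fin 3 → ℝ) → Matrix (Fin 3) (Fin 3) ℝ)
    (hv : ∀ i, Differentiable ℝ fun p => v p i)
    (hρ : Differentiable ℝ ρ)
    (hU : ∀ i j, Differentiable ℝ fun p => U p i j)
    (hmass : ∀ p, partialT ρ p + ∑ k, partialX k (fun q => ρ q * v q k) p = 0)
    (heq : ∀ p, ∀ i j : Fin 3,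
      partialT (fun q => U q i j) p + ∑ k, v p k * partialX k (fun q => U q i j) p
        = ∑ k, partialX k (fun q => v q i) p * U p k j) :
    ∀ p, partialT (fun q => ρ q * (U q).det) p
        + ∑ k, v p k * partialX k (fun q => ρ q * (U q).det) p = 0 := by
  intro p
  have hDU : materialDerivMatrix v U p = velocityGradient v p * U p := by
    ext i j
    exact heq p i j
  change materialDeriv v (fun q => ρ q * (U q).det) p = 0
  rw [materialDeriv_mul v (hρ p) (DifferentiableAt.matrix_det fun i j => hU i j p),
    materialDeriv_eq_of_mass_conservation v (hρ p) (fun k => hv k p) (hmass p),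
    materialDeriv_det v fun i j => hU i j p, hDU, Matrix.trace_mul_mul_adjugate]
  ring
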